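/- arXiv:1701.04050 — 3 statements merged into one kernel-verified Lean document; each statement's English description precedes it below -/
import Mathlib

section
/- Let a, λ ∈ ℝ with λ > −1 and |a| ≤ 1. Suppose F : ℝ → ℝ is odd, continuously differentiable, bounded, with F, F' ∈ L²(ℝ), and h : ℝ → ℝ is the (principal-value) Hilbert transform of F, with h bounded and h ∈ L²(ℝ). Assume that for every z > 0 the profile equation F(z) + ((1+λ)z − a·∫₀^z h(s) ds)·F'(z) + 2·F(z)·h(z) = 0 holds. Then there exists a constant C > 0 such that |F(z)| ≤ C·|z|^{−1/(1+λ)} for all |z| ≥ 1; in particular F belongs to weak L^{1+λ} near infinity and the corresponding self-similar solution ω(t,x) = (1/(1−t))·F(x/(1−t)^{1+λ}) is uniformly bounded on {|x| ≥ b} × [0,1] for every b > 0. -/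
open MeasureTheory Filter

/-- `h` is the pointwise (principal-value) Hilbert transform of `f`. -/
def IsPVHilbert (f h : ℝ → ℝ) : Prop :=
  ∀ x : ℝ, Tendsto
    (fun ε : ℝ => (Real.pi)⁻¹ * ∫ y in {y : ℝ | ε < |x - y|}, f y / (x - y))
    (nhdsWithin 0 (Set.Ioi 0)) (nhds (h x))

/-!
For `z > 0` the profile equation is the linear ODE `D F' = -(1 + 2h) F` with drift
`D(z) = (1+λ) z - a ∫₀^z h`. As `h ∈ L²`, `|∫₀^z h| = O(√z)`, so `D(z) = (1+λ) z + O(√z)` and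
`(log F²)' = -2(1 + 2h)/D ≤ -2/((1+λ) z) + O(z^{-3/2}) + O(h²)` for large `z`; the error terms are
integrable on `[z₀, ∞)`, and integrating gives `F(z)² ≤ B z^{-2/(1+λ)}`. Zeros of `F` do no harm:
by Grönwall, a zero beyond `z₀` forces `F` to vanish from there on. Boundedness of `F` covers
`1 ≤ z ≤ z₀`, and oddness covers negative `z`.
-/

open Set

theorem abs_intervalIntegral_le_mul_sqrt {h : ℝ → ℝ} (hh : MemLp h 2 volume) {s : ℝ}
    (hs : 0 ≤ s) : |∫ t in (0:ℝ)..s, h t| ≤ ((∫ t, h t ^ 2) + 1) / 2 * √s := by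
  rcases hs.eq_or_lt with rfl | hs
  · simp
  have hsq : Integrable (fun t => h t ^ 2) := (memLp_two_iff_integrable_sq hh.1).mp hh
  have hloc : IntervalIntegrable h volume 0 s :=
    ((hh.locallyIntegrable one_le_two).integrableOn_isCompact isCompact_uIcc).intervalIntegrable
  have hr : 0 < √s := Real.sqrt_pos.mpr hs
  -- AM-GM, weighted so that both terms integrate to `O(√s)` over `[0, s]`
  have amgm : ∀ t, |h t| ≤ (√s * h t ^ 2 + (√s)⁻¹) / 2 := fun t => by
    rw [← sq_abs (h t)]
    field_simp
    nlinarith [sq_nonneg (√s * |h t| - 1)]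
  calc |∫ t in (0:ℝ)..s, h t| ≤ ∫ t in (0:ℝ)..s, |h t| :=
        intervalIntegral.abs_integral_le_integral_abs hs.le
    _ ≤ ∫ t in (0:ℝ)..s, (√s * h t ^ 2 + (√s)⁻¹) / 2 :=
        intervalIntegral.integral_mono_on hs.le hloc.abs
          (((hsq.intervalIntegrable.const_mul √s).add intervalIntegrable_const).div_const 2)
          fun t _ => amgm t
    _ = (√s * ∫ t in (0:ℝ)..s, h t ^ 2) / 2 + √s / 2 := by
        rw [intervalIntegral.integral_div, intervalIntegral.integral_add
          (hsq.intervalIntegrable.const_mul √s) intervalIntegrable_const,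
          intervalIntegral.integral_const_mul, intervalIntegral.integral_const, smul_eq_mul,
          sub_zero, ← div_eq_mul_inv, Real.div_sqrt, add_div]
    _ ≤ (√s * ∫ t, h t ^ 2) / 2 + √s / 2 := by
        gcongr
        rw [intervalIntegral.integral_of_le hs.le]
        exact setIntegral_le_integral hsq (ae_of_all _ fun t => sq_nonneg _)
    _ = ((∫ t, h t ^ 2) + 1) / 2 * √s := by ring

theorem exists_half_mul_le_of_abs_sub_le_mul_sqrt {D : ℝ → ℝ} {b c : ℝ} (hb : 0 < b)
    (hD : ∀ s, 0 ≤ s → |D s - b * s| ≤ c * √s) :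
    ∃ z₀, 1 ≤ z₀ ∧ ∀ s, z₀ ≤ s → b * s / 2 ≤ D s := by
  refine ⟨max 1 ((2 * c / b) ^ 2), le_max_left _ _, fun s hs => ?_⟩
  have hs0 : 0 ≤ s := zero_le_one.trans ((le_max_left _ _).trans hs)
  have hsqrt : 2 * c / b ≤ √s :=
    (le_abs_self _).trans (Real.abs_le_sqrt ((le_max_right _ _).trans hs))
  have hc : c * √s ≤ b * s / 2 := by
    have := mul_le_mul_of_nonneg_right hsqrt (Real.sqrt_nonneg s)
    rw [Real.mul_self_sqrt hs0, div_mul_eq_mul_div, div_le_iff₀ hb] at this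
    linarith
  linarith [neg_abs_le (D s - b * s), hD s hs0]

theorem rpow_neg_three_halves {s : ℝ} (hs : 0 ≤ s) : s ^ (-(3 / 2) : ℝ) = (s * √s)⁻¹ := by
  rw [Real.rpow_neg hs, Real.sqrt_eq_rpow, ← Real.rpow_one_add' hs (by norm_num)]
  norm_num

theorem neg_two_mul_div_le {b c d s y : ℝ} (hb : 0 < b) (hs : 1 ≤ s)
    (hd : b * s / 2 ≤ d) (hdc : |d - b * s| ≤ c * √s) :
    -2 * (1 + 2 * y) / d
      ≤ -2 / b * s⁻¹ + 4 * (c + b) / b ^ 2 * s ^ (-(3 / 2) : ℝ) + 4 / b * y ^ 2 := by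
  rw [rpow_neg_three_halves (by linarith)]
  obtain ⟨r, hr, rfl⟩ : ∃ r, 1 ≤ r ∧ s = r ^ 2 :=
    ⟨√s, Real.one_le_sqrt.mpr hs, (Real.sq_sqrt (by linarith)).symm⟩
  rw [Real.sqrt_sq (by linarith)] at hdc ⊢
  have hd0 : 0 < d := lt_of_lt_of_le (by positivity) hd
  have drift : -2 / d ≤ -2 / b * (r ^ 2)⁻¹ + 4 * c / b ^ 2 * (r ^ 2 * r)⁻¹ :=
    calc -2 / d = -2 / b * (r ^ 2)⁻¹ + 2 * (d - b * r ^ 2) / (d * (b * r ^ 2)) := by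
          field_simp; ring
      _ ≤ -2 / b * (r ^ 2)⁻¹ + 2 * (c * r) / (b * r ^ 2 / 2 * (b * r ^ 2)) := by
          have hcr : 0 ≤ c * r := (abs_nonneg _).trans hdc
          have hden := mul_le_mul_of_nonneg_right hd (by positivity : (0 : ℝ) ≤ b * r ^ 2)
          have : 2 * (d - b * r ^ 2) / (d * (b * r ^ 2))
              ≤ 2 * (c * r) / (b * r ^ 2 / 2 * (b * r ^ 2)) :=
            div_le_div₀ (by positivity) (by linarith [le_abs_self (d - b * r ^ 2)])
              (by positivity) hden
          linarith
      _ = -2 / b * (r ^ 2)⁻¹ + 4 * c / b ^ 2 * (r ^ 2 * r)⁻¹ := by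
          field_simp; ring
  have forcing : -4 * y / d ≤ 4 / b * ((r ^ 2 * r)⁻¹ + y ^ 2) :=
    calc -4 * y / d ≤ 4 * |y| / (b * r ^ 2 / 2) :=
          div_le_div₀ (by positivity) (by linarith [neg_abs_le y]) (by positivity) hd
      _ = 4 / b * (2 * |y| * (r ^ 2)⁻¹) := by field_simp
      _ ≤ 4 / b * ((r ^ 2)⁻¹ ^ 2 + y ^ 2) := by
          gcongr
          rw [← sq_abs y]
          linarith [sq_nonneg (|y| - (r ^ 2)⁻¹)]
      _ ≤ 4 / b * ((r ^ 2 * r)⁻¹ + y ^ 2) := by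
          gcongr
          rw [inv_pow]
          exact inv_anti₀ (by positivity) (by nlinarith : r ^ 2 * r ≤ (r ^ 2) ^ 2)
  calc -2 * (1 + 2 * y) / d = -2 / d + -4 * y / d := by ring
    _ ≤ _ := by
        have : 4 * (c + b) / b ^ 2 = 4 * c / b ^ 2 + 4 / b := by field_simp
        rw [this]
        linarith

/-- The first term yields the decay rate; the others are integrable on `[1, ∞)` when `h ∈ L²`. -/
noncomputable def logDerivMajorant (b κ : ℝ) (h : ℝ → ℝ) (s : ℝ) : ℝ :=
  -2 / b * s⁻¹ + κ * s ^ (-(3 / 2) : ℝ) + 4 / b * h s ^ 2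

section logDerivMajorant

variable {h : ℝ → ℝ} {b κ z₀ z : ℝ}

theorem intervalIntegrable_logDerivMajorant (hz₀ : 0 < z₀) (hz : z₀ ≤ z)
    (hh : Integrable (fun s => h s ^ 2)) :
    IntervalIntegrable (logDerivMajorant b κ h) volume z₀ z := by
  have h0 : (0 : ℝ) ∉ uIcc z₀ z := notMem_uIcc_of_lt hz₀ (hz₀.trans_le hz)
  exact (((intervalIntegral.intervalIntegrable_inv (fun s hs => ne_of_mem_of_not_mem hs h0)
    continuousOn_id).const_mul _).add
    ((intervalIntegral.intervalIntegrable_rpow (Or.inr h0)).const_mul _)).add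
    (hh.intervalIntegrable.const_mul _)

theorem integral_logDerivMajorant_le (hb : 0 < b) (hκ : 0 ≤ κ) (hz₀ : 1 ≤ z₀) (hz : z₀ ≤ z)
    (hh : Integrable (fun s => h s ^ 2)) :
    ∫ s in z₀..z, logDerivMajorant b κ h s
      ≤ -2 / b * Real.log (z / z₀) + (2 * κ + 4 / b * ∫ s, h s ^ 2) := by
  have h0 : (0 : ℝ) ∉ uIcc z₀ z := notMem_uIcc_of_lt (by linarith) (by linarith)
  have hinv : IntervalIntegrable (fun s : ℝ => s⁻¹) volume z₀ z :=
    intervalIntegral.intervalIntegrable_inv (fun s hs => ne_of_mem_of_not_mem hs h0)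
      continuousOn_id
  have hrpow : IntervalIntegrable (fun s : ℝ => s ^ (-(3 / 2) : ℝ)) volume z₀ z :=
    intervalIntegral.intervalIntegrable_rpow (Or.inr h0)
  have tail : ∫ s in z₀..z, s ^ (-(3 / 2) : ℝ) ≤ 2 := by
    rw [integral_rpow (Or.inr ⟨by norm_num, h0⟩), div_le_iff_of_neg (by norm_num)]
    have : z₀ ^ (-(3 / 2) + 1 : ℝ) ≤ 1 := Real.rpow_le_one_of_one_le_of_nonpos hz₀ (by norm_num)
    linarith [Real.rpow_pos_of_pos (by linarith : 0 < z) (-(3 / 2) + 1 : ℝ)]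
  have hsq : ∫ s in z₀..z, h s ^ 2 ≤ ∫ s, h s ^ 2 := by
    rw [intervalIntegral.integral_of_le hz]
    exact setIntegral_le_integral hh (ae_of_all _ fun s => sq_nonneg _)
  unfold logDerivMajorant
  rw [intervalIntegral.integral_add ((hinv.const_mul _).add (hrpow.const_mul _))
      (hh.intervalIntegrable.const_mul _),
    intervalIntegral.integral_add (hinv.const_mul _) (hrpow.const_mul _),
    intervalIntegral.integral_const_mul, intervalIntegral.integral_const_mul,
    intervalIntegral.integral_const_mul, integral_inv h0]
  nlinarith [mul_le_mul_of_nonneg_left tail hκ,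
    mul_le_mul_of_nonneg_left hsq (by positivity : 0 ≤ 4 / b)]

end logDerivMajorant

theorem sq_le_sq_mul_exp_integral {f f' R : ℝ → ℝ} {a b : ℝ} (hab : a ≤ b)
    (hf : ∀ x ∈ Icc a b, HasDerivAt f (f' x) x) (hf' : ContinuousOn f' (Icc a b))
    (hne : ∀ x ∈ Icc a b, f x ≠ 0) (hR : IntervalIntegrable R volume a b)
    (hle : ∀ x ∈ Icc a b, 2 * f' x / f x ≤ R x) :
    f b ^ 2 ≤ f a ^ 2 * Real.exp (∫ x in a..b, R x) := by
  have hlog : ∀ x ∈ uIcc a b, HasDerivAt (fun t => Real.log (f t ^ 2)) (2 * f' x / f x) x := by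
    intro x hx
    rw [uIcc_of_le hab] at hx
    convert ((hf x hx).fun_pow 2).log (pow_ne_zero 2 (hne x hx)) using 1
    field_simp [hne x hx]
    ring
  have hcont : ContinuousOn (fun x => 2 * f' x / f x) (uIcc a b) := by
    rw [uIcc_of_le hab]
    exact (continuousOn_const.mul hf').div
      (fun x hx => (hf x hx).continuousAt.continuousWithinAt) hne
  have hftc := intervalIntegral.integral_eq_sub_of_hasDerivAt hlog hcont.intervalIntegrable
  have hmono := intervalIntegral.integral_mono_on hab hcont.intervalIntegrable hR hle
  have hpos : ∀ x ∈ Icc a b, 0 < f x ^ 2 := fun x hx => by positivity [hne x hx]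
  calc f b ^ 2 = Real.exp (Real.log (f b ^ 2)) :=
        (Real.exp_log (hpos b (right_mem_Icc.mpr hab))).symm
    _ ≤ Real.exp (Real.log (f a ^ 2) + ∫ x in a..b, R x) := by gcongr; linarith
    _ = f a ^ 2 * Real.exp (∫ x in a..b, R x) := by
        rw [Real.exp_add, Real.exp_log (hpos a (left_mem_Icc.mpr hab))]

theorem abs_le_mul_abs_of_mul_eq {d d₀ u v y M : ℝ} (hd₀ : 0 < d₀) (hd : d₀ ≤ d)
    (hy : |y| ≤ M) (h : d * u = -(1 + 2 * y) * v) : |u| ≤ (1 + 2 * M) / d₀ * |v| := by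
  have hcoef : |1 + 2 * y| ≤ 1 + 2 * M := by
    have := abs_add_le 1 (2 * y)
    rw [abs_one, abs_mul, abs_two] at this
    linarith
  rw [div_mul_eq_mul_div, le_div_iff₀ hd₀]
  calc |u| * d₀ ≤ |u| * d := by gcongr
    _ = |1 + 2 * y| * |v| := by
        rw [← abs_of_pos (hd₀.trans_le hd), ← abs_mul, mul_comm, h, abs_mul, abs_neg]
    _ ≤ (1 + 2 * M) * |v| := by gcongr

theorem exists_abs_le_mul_rpow_of_linear_ode {F F' h D : ℝ → ℝ} {b c Mh z₀ : ℝ} (hb : 0 < b)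
    (hc : 0 ≤ c) (hz₀ : 1 ≤ z₀) (hF : ∀ x, HasDerivAt F (F' x) x) (hF' : Continuous F')
    (hh : Integrable (fun s => h s ^ 2)) (hMh : ∀ s, |h s| ≤ Mh)
    (hDlow : ∀ s, z₀ ≤ s → b * s / 2 ≤ D s) (hDsub : ∀ s, z₀ ≤ s → |D s - b * s| ≤ c * √s)
    (hode : ∀ s, z₀ ≤ s → D s * F' s = -(1 + 2 * h s) * F s) :
    ∃ A, ∀ z, z₀ ≤ z → |F z| ≤ A * z ^ (-(1 / b)) := by
  have hDpos : ∀ s, z₀ ≤ s → 0 < D s := fun s hs =>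
    lt_of_lt_of_le (by have := hz₀.trans hs; positivity) (hDlow s hs)
  have hK : ∀ s, z₀ ≤ s → |F' s| ≤ (1 + 2 * Mh) / (b * z₀ / 2) * |F s| := fun s hs =>
    abs_le_mul_abs_of_mul_eq (by positivity) (le_trans (by gcongr) (hDlow s hs)) (hMh s)
      (hode s hs)
  set κ := 4 * (c + b) / b ^ 2
  set C := 2 * κ + 4 / b * ∫ s, h s ^ 2
  set B := F z₀ ^ 2 * Real.exp (C + 2 / b * Real.log z₀)
  refine ⟨√B, fun z hz => ?_⟩
  have hz0 : 0 < z := by linarith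
  refine abs_le_of_sq_le_sq ?_ (by positivity)
  rw [mul_pow, Real.sq_sqrt (by positivity)]
  by_cases hFz : F z = 0
  · rw [hFz, zero_pow two_ne_zero]; positivity
  have hne : ∀ s ∈ Icc z₀ z, F s ≠ 0 := fun s hs hFs => hFz <|
    eq_zero_of_abs_deriv_le_mul_abs_self_of_eq_zero_right
      (fun x _ => (hF x).continuousAt.continuousWithinAt) (fun x _ => (hF x).hasDerivWithinAt) hFs
      (fun x hx => by simpa only [Real.norm_eq_abs] using hK x (hs.1.trans hx.1))
      z ⟨hs.2, le_rfl⟩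
  have hrate : ∀ s ∈ Icc z₀ z, 2 * F' s / F s ≤ logDerivMajorant b κ h s := fun s hs => by
    have hFs : F' s = -(1 + 2 * h s) * F s / D s := by
      rw [eq_div_iff (hDpos s hs.1).ne', ← hode s hs.1, mul_comm]
    have : 2 * F' s / F s = -2 * (1 + 2 * h s) / D s := by
      rw [hFs]; field_simp [hne s hs]
    rw [this]
    exact neg_two_mul_div_le hb (hz₀.trans hs.1) (hDlow s hs.1) (hDsub s hs.1)
  calc F z ^ 2 ≤ F z₀ ^ 2 * Real.exp (∫ s in z₀..z, logDerivMajorant b κ h s) :=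
        sq_le_sq_mul_exp_integral hz (fun x _ => hF x) hF'.continuousOn hne
          (intervalIntegrable_logDerivMajorant (by linarith) hz hh) hrate
    _ ≤ F z₀ ^ 2 * Real.exp (-2 / b * Real.log (z / z₀) + C) := by
        gcongr
        exact integral_logDerivMajorant_le hb (by positivity) hz₀ hz hh
    _ = B * (z ^ (-(1 / b))) ^ 2 := by
        rw [← Real.rpow_mul_natCast hz0.le, Real.rpow_def_of_pos hz0,
          Real.log_div hz0.ne' (by linarith), mul_assoc, ← Real.exp_add]
        ring_nf

theorem exists_abs_le_mul_rpow_of_bounded {F : ℝ → ℝ} {M A p z₀ : ℝ} (hM : ∀ z, |F z| ≤ M)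
    (hz₀ : 1 ≤ z₀) (hp : 0 ≤ p) (hA : ∀ z, z₀ ≤ z → |F z| ≤ A * z ^ (-p)) :
    ∃ C, 0 < C ∧ ∀ z, 1 ≤ z → |F z| ≤ C * z ^ (-p) := by
  refine ⟨max (max A (M * z₀ ^ p)) 1, by positivity, fun z hz => ?_⟩
  have hz0 : 0 < z := by linarith
  rcases le_total z₀ z with hzz₀ | hzz₀
  · calc |F z| ≤ A * z ^ (-p) := hA z hzz₀
      _ ≤ _ := by gcongr; exact (le_max_left _ _).trans (le_max_left _ _)
  · calc |F z| ≤ M * z₀ ^ p * z₀ ^ (-p) := by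
          rw [mul_assoc, ← Real.rpow_add (zero_lt_one.trans_le hz₀), add_neg_cancel,
            Real.rpow_zero, mul_one]
          exact hM z
      _ ≤ M * z₀ ^ p * z ^ (-p) := by
          have : 0 ≤ M := (abs_nonneg _).trans (hM 0)
          exact mul_le_mul_of_nonneg_left (Real.rpow_le_rpow_of_nonpos hz0 hzz₀ (by linarith))
            (by positivity)
      _ ≤ _ := by gcongr; exact (le_max_right _ _).trans (le_max_left _ _)

theorem abs_le_mul_abs_rpow_of_odd {F : ℝ → ℝ} {C p : ℝ} (hodd : ∀ z, F (-z) = -F z)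
    (hF : ∀ z, 1 ≤ z → |F z| ≤ C * z ^ (-p)) (z : ℝ) (hz : 1 ≤ |z|) : |F z| ≤ C * |z| ^ (-p) := by
  rcases abs_choice z with hz' | hz' <;> rw [hz'] at hz ⊢
  · exact hF z hz
  · rw [← abs_neg, ← hodd]
    exact hF (-z) hz

theorem profile_decay_general (a lam : ℝ) (hlam : -1 < lam) (ha : |a| ≤ 1)
    (F h : ℝ → ℝ)
    (hFodd : ∀ z : ℝ, F (-z) = -F z)
    (hFC1 : ContDiff ℝ 1 F)
    (hFbdd : ∃ M : ℝ, ∀ z : ℝ, |F z| ≤ M)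
    (hhbdd : ∃ M : ℝ, ∀ z : ℝ, |h z| ≤ M)
    (hhL2 : MemLp h 2 (volume : Measure ℝ))
    (heq : ∀ z : ℝ, 0 < z →
      F z + ((1 + lam) * z - a * ∫ s in (0:ℝ)..z, h s) * deriv F z
        + 2 * F z * h z = 0) :
    ∃ C : ℝ, 0 < C ∧ ∀ z : ℝ, 1 ≤ |z| → |F z| ≤ C * |z| ^ (-(1 / (1 + lam))) := by
  obtain ⟨M, hM⟩ := hFbdd
  obtain ⟨Mh, hMh⟩ := hhbdd
  have hb : 0 < 1 + lam := by linarith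
  set D : ℝ → ℝ := fun s => (1 + lam) * s - a * ∫ t in (0:ℝ)..s, h t
  have hDsub : ∀ s, 0 ≤ s → |D s - (1 + lam) * s| ≤ ((∫ t, h t ^ 2) + 1) / 2 * √s := by
    intro s hs
    calc |D s - (1 + lam) * s| = |a| * |∫ t in (0:ℝ)..s, h t| := by
          simp only [D, sub_sub_cancel_left, abs_neg, abs_mul]
      _ ≤ |∫ t in (0:ℝ)..s, h t| := mul_le_of_le_one_left (abs_nonneg _) ha
      _ ≤ _ := abs_intervalIntegral_le_mul_sqrt hhL2 hs
  obtain ⟨z₀, hz₀, hDlow⟩ := exists_half_mul_le_of_abs_sub_le_mul_sqrt hb hDsub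
  obtain ⟨A, hA⟩ := exists_abs_le_mul_rpow_of_linear_ode hb (by positivity) hz₀
    (fun x => (hFC1.differentiable one_ne_zero x).hasDerivAt) (hFC1.continuous_deriv le_rfl)
    ((memLp_two_iff_integrable_sq hhL2.1).mp hhL2) hMh hDlow
    (fun s hs => hDsub s (by linarith)) (fun s hs => by linarith [heq s (by linarith)])
  obtain ⟨C, hC, hCF⟩ := exists_abs_le_mul_rpow_of_bounded hM hz₀ (by positivity) hA
  exact ⟨C, hC, abs_le_mul_abs_rpow_of_odd hFodd hCF⟩

/-- Decay of self-similar profiles: a bounded odd `C¹ ∩ L²` profile solving the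
self-similar profile equation decays like `|z|^{-1/(1+λ)}` at infinity. -/
theorem profile_decay (a lam : ℝ) (hlam : -1 < lam) (ha : |a| ≤ 1)
    (F h : ℝ → ℝ)
    (hFodd : ∀ z : ℝ, F (-z) = -F z)
    (hFC1 : ContDiff ℝ 1 F)
    (hFbdd : ∃ M : ℝ, ∀ z : ℝ, |F z| ≤ M)
    (hFL2 : MemLp F 2 (volume : Measure ℝ))
    (hF'L2 : MemLp (deriv F) 2 (volume : Measure ℝ))
    (hHT : IsPVHilbert F h)
    (hhbdd : ∃ M : ℝ, ∀ z : ℝ, |h z| ≤ M)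
    (hhL2 : MemLp h 2 (volume : Measure ℝ))
    (heq : ∀ z : ℝ, 0 < z →
      F z + ((1 + lam) * z - a * ∫ s in (0:ℝ)..z, h s) * deriv F z
        + 2 * F z * h z = 0) :
    ∃ C : ℝ, 0 < C ∧ ∀ z : ℝ, 1 ≤ |z| → |F z| ≤ C * |z| ^ (-(1 / (1 + lam))) :=
  profile_decay_general a lam hlam ha F h hFodd hFC1 hFbdd hhbdd hhL2 heq
end

section
/- For every x ∈ ℝ, lim_{ε → 0⁺} (1/π) ∫_{{y : |x − y| > ε}} (y/(1+y²))/(x − y) dy = −1/(1+x²). That is, the (principal-value) Hilbert transform of the function ω₀(y) = y/(1+y²) is Hω₀(x) = −1/(1+x²). -/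
/-!
On each half-line `y < x - ε` and `y > x + ε` the integrand has an explicit primitive, built
from `log (1 + y²)`, `log |y - x|` and `arctan y`, whose limits at `±∞` are `∓ π / (2 (1 + x²))`.
The two `log ε` terms cancel, so the truncated integral equals `-π / (1 + x²)` plus a
term that is continuous in `ε` and vanishes at `ε = 0`.
-/

open MeasureTheory Filter

open Set Real Topology Bornology

lemma tendsto_one_add_sq_div_sub_sq_cobounded (x : ℝ) :
    Tendsto (fun y : ℝ => (1 + y ^ 2) / (y - x) ^ 2) (cobounded ℝ) (𝓝 1) := by
  have hinv := tendsto_inv₀_cobounded (α := ℝ)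
  have hlim : Tendsto (fun y : ℝ => ((y⁻¹) ^ 2 + 1) / (1 - x * y⁻¹) ^ 2) (cobounded ℝ) (𝓝 1) := by
    convert ((hinv.pow 2).add_const 1).div ((hinv.const_mul x).const_sub 1 |>.pow 2)
      (by simp) using 2 <;> simp
  refine hlim.congr' ?_
  filter_upwards [eventually_ne_cobounded 0] with y hy
  field_simp

lemma tendsto_log_one_add_sq_div_two_sub_log_cobounded (x : ℝ) :
    Tendsto (fun y : ℝ => log (1 + y ^ 2) / 2 - log (y - x)) (cobounded ℝ) (𝓝 0) := by
  have hlim := ((continuousAt_log one_ne_zero).tendsto.comp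
    (tendsto_one_add_sq_div_sub_sq_cobounded x)).div_const 2
  rw [log_one, zero_div] at hlim
  refine hlim.congr' ?_
  filter_upwards [eventually_ne_cobounded x] with y hy
  rw [Function.comp_apply, log_div (by positivity) (by simpa [sub_eq_zero] using hy), log_pow]
  push_cast
  ring

/- From the partial fractions
`(1 + x²) · y / ((1 + y²)(x - y)) = x · (y / (1 + y²) - 1 / (y - x)) - 1 / (1 + y²)`;
`Real.log (y - x) = log |y - x|`, so this is a primitive on both sides of `x`. -/
noncomputable def pvPrimitive (x y : ℝ) : ℝ :=
  (x * (log (1 + y ^ 2) / 2 - log (y - x)) - arctan y) / (1 + x ^ 2)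

lemma hasDerivAt_pvPrimitive {x y : ℝ} (hy : y ≠ x) :
    HasDerivAt (pvPrimitive x) (y / (1 + y ^ 2) / (x - y)) y := by
  have hsq : HasDerivAt (fun t : ℝ => 1 + t ^ 2) (2 * y) y := by
    simpa using (hasDerivAt_pow 2 y).const_add 1
  have hlog := ((hsq.log (by positivity)).div_const 2).sub
    (((hasDerivAt_id y).sub_const x).log (sub_ne_zero.mpr hy))
  refine (((hlog.const_mul x).sub (hasDerivAt_arctan y)).div_const (1 + x ^ 2)).congr_deriv ?_
  have : x - y ≠ 0 := sub_ne_zero.mpr hy.symm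
  have : y - x ≠ 0 := sub_ne_zero.mpr hy
  rw [id]
  field_simp
  ring

lemma tendsto_pvPrimitive_atTop (x : ℝ) :
    Tendsto (pvPrimitive x) atTop (𝓝 (-(π / 2) / (1 + x ^ 2))) := by
  have hlim := (((tendsto_log_one_add_sq_div_two_sub_log_cobounded x).mono_left
    IsOrderBornology.atTop_le_cobounded).const_mul x |>.sub
    (tendsto_nhds_of_tendsto_nhdsWithin tendsto_arctan_atTop)).div_const (1 + x ^ 2)
  rwa [mul_zero, zero_sub] at hlim

lemma tendsto_pvPrimitive_atBot (x : ℝ) :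
    Tendsto (pvPrimitive x) atBot (𝓝 ((π / 2) / (1 + x ^ 2))) := by
  have hlim := (((tendsto_log_one_add_sq_div_two_sub_log_cobounded x).mono_left
    IsOrderBornology.atBot_le_cobounded).const_mul x |>.sub
    (tendsto_nhds_of_tendsto_nhdsWithin tendsto_arctan_atBot)).div_const (1 + x ^ 2)
  rwa [mul_zero, zero_sub, neg_neg] at hlim

-- The principal-value cancellation: the two `log |y - x|` terms are both `log ε`.
lemma pvPrimitive_sub_sub_pvPrimitive_add (x ε : ℝ) :
    pvPrimitive x (x - ε) - pvPrimitive x (x + ε) =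
      (x * (log (1 + (x - ε) ^ 2) - log (1 + (x + ε) ^ 2)) / 2
        - (arctan (x - ε) - arctan (x + ε))) / (1 + x ^ 2) := by
  simp only [pvPrimitive, sub_sub_cancel_left, add_sub_cancel_left, log_neg_eq_log]
  ring

lemma setOf_lt_abs_sub_eq_Iio_union_Ioi (x ε : ℝ) :
    {y : ℝ | ε < |x - y|} = Iio (x - ε) ∪ Ioi (x + ε) := by
  ext y
  simp only [mem_ofPred_eq, mem_union, mem_Iio, mem_Ioi, lt_abs]
  grind

lemma abs_div_one_add_sq_div_sub_le {x y ε : ℝ} (hε : 0 < ε) (hy : ε < |x - y|) :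
    |y / (1 + y ^ 2) / (x - y)| ≤ (|x| / ε + 1) * (1 + y ^ 2)⁻¹ := by
  have hxy : x - y ≠ 0 := abs_pos.mp (hε.trans hy)
  have hsplit : y / (1 + y ^ 2) / (x - y) = (x / (x - y) - 1) * (1 + y ^ 2)⁻¹ := by
    field_simp
    ring
  rw [hsplit, abs_mul, abs_of_pos (by positivity : (0 : ℝ) < (1 + y ^ 2)⁻¹)]
  gcongr
  calc |x / (x - y) - 1| ≤ |x| / |x - y| + 1 := by simpa [abs_div] using abs_sub (x / (x - y)) 1
    _ ≤ |x| / ε + 1 := by gcongr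

lemma integrableOn_div_one_add_sq_div_sub {x ε : ℝ} (hε : 0 < ε) :
    IntegrableOn (fun y : ℝ => y / (1 + y ^ 2) / (x - y)) {y | ε < |x - y|} := by
  refine (integrable_inv_one_add_sq.const_mul (|x| / ε + 1)).integrableOn.mono'
    (by fun_prop : Measurable fun y : ℝ => y / (1 + y ^ 2) / (x - y)).aestronglyMeasurable
    ((ae_restrict_iff' ?_).mpr (ae_of_all _ fun y hy => ?_))
  · exact measurableSet_lt measurable_const (by fun_prop)
  · exact abs_div_one_add_sq_div_sub_le hε hy

lemma integral_div_one_add_sq_div_sub {x ε : ℝ} (hε : 0 < ε) :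
    ∫ y in {y : ℝ | ε < |x - y|}, y / (1 + y ^ 2) / (x - y) =
      pvPrimitive x (x - ε) - pvPrimitive x (x + ε) - π / (1 + x ^ 2) := by
  have hint := integrableOn_div_one_add_sq_div_sub (x := x) hε
  rw [setOf_lt_abs_sub_eq_Iio_union_Ioi] at hint ⊢
  rw [setIntegral_union ((Iic_disjoint_Ioi (by linarith)).mono_left Iio_subset_Iic_self)
      measurableSet_Ioi hint.left_of_union hint.right_of_union, ← integral_Iic_eq_integral_Iio,
    integral_Iic_of_hasDerivAt_of_tendsto'
      (fun y hy => hasDerivAt_pvPrimitive (by linarith [hy.out] : y < x).ne)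
      (hint.left_of_union.congr_set_ae Iio_ae_eq_Iic.symm) (tendsto_pvPrimitive_atBot x),
    integral_Ioi_of_hasDerivAt_of_tendsto'
      (fun y hy => hasDerivAt_pvPrimitive (by linarith [hy.out] : x < y).ne')
      hint.right_of_union (tendsto_pvPrimitive_atTop x)]
  ring

lemma tendsto_integral_div_one_add_sq_div_sub (x : ℝ) :
    Tendsto (fun ε => ∫ y in {y : ℝ | ε < |x - y|}, y / (1 + y ^ 2) / (x - y)) (𝓝[>] 0)
      (𝓝 (-π / (1 + x ^ 2))) := by
  have hcont : Continuous fun ε : ℝ => (x * (log (1 + (x - ε) ^ 2) - log (1 + (x + ε) ^ 2)) / 2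
      - (arctan (x - ε) - arctan (x + ε))) / (1 + x ^ 2) - π / (1 + x ^ 2) := by
    fun_prop (disch := intro; positivity)
  have hlim := (hcont.tendsto 0).mono_left (nhdsWithin_le_nhds (s := Ioi 0))
  rw [add_zero, sub_zero, sub_self, sub_self, mul_zero, zero_div, sub_self, zero_div, zero_sub,
    ← neg_div] at hlim
  refine hlim.congr' ?_
  filter_upwards [self_mem_nhdsWithin] with ε hε
  rw [integral_div_one_add_sq_div_sub hε, pvPrimitive_sub_sub_pvPrimitive_add]

/-- The Hilbert transform of `y ↦ y/(1+y²)` is `x ↦ -1/(1+x²)`. -/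
theorem hilbert_of_CLM_profile :
    IsPVHilbert (fun y : ℝ => y / (1 + y ^ 2)) (fun x : ℝ => -1 / (1 + x ^ 2)) := fun x => by
  convert (tendsto_integral_div_one_add_sq_div_sub x).const_mul π⁻¹ using 2
  field_simp
end

section
/- Let 0 < α ≤ 1, let C = sin(απ/2) + i·cos(απ/2) ∈ ℂ, and define V : (0,∞) → ℂ by V(z) = 1/(i + C·z^α) (real power z^α for z > 0). Then V is differentiable on (0,∞) and satisfies the complex profile ODE V(z) + (1/α)·z·V'(z) = i·V(z)² for all z > 0. (Its real and imaginary parts are the odd C^α self-similar profile F^{(α)} for the Constantin–Lax–Majda equation and its Hilbert transform, respectively.) -/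
/-!
Write `V = 1/D` with `D(z) = i + C z^α`. The Euler identity `z · (z^α)' = α z^α` gives
`V + (1/α) z V' = (D - C z^α)/D² = i/D² = i V²`, for any constant `C`, wherever `D ≠ 0`;
and `D` never vanishes on `(0,∞)`, since `Im D = 1 + cos(απ/2) z^α ≥ 1` for `0 < α ≤ 1`.
-/

open Complex

noncomputable def reciprocalRpowProfile (a c : ℂ) (α : ℝ) (z : ℝ) : ℂ :=
  1 / (a + c * ((z ^ α : ℝ) : ℂ))

theorem hasDerivAt_reciprocalRpowProfile (a c : ℂ) {α z : ℝ} (hz : z ≠ 0)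
    (hD : a + c * ((z ^ α : ℝ) : ℂ) ≠ 0) :
    HasDerivAt (reciprocalRpowProfile a c α)
      (-(c * ((α * z ^ (α - 1) : ℝ) : ℂ)) / (a + c * ((z ^ α : ℝ) : ℂ)) ^ 2) z := by
  have hrpow : HasDerivAt (fun w : ℝ => ((w ^ α : ℝ) : ℂ)) ((α * z ^ (α - 1) : ℝ) : ℂ) z :=
    (Real.hasDerivAt_rpow_const (Or.inl hz)).ofReal_comp
  exact ((hasDerivAt_const z (1 : ℂ)).fun_div ((hrpow.const_mul c).const_add a) hD)
    |>.congr_deriv (by ring)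

theorem reciprocalRpowProfile_add_mul_deriv (a c : ℂ) {α z : ℝ} (hα : α ≠ 0) (hz : z ≠ 0)
    (hD : a + c * ((z ^ α : ℝ) : ℂ) ≠ 0) :
    reciprocalRpowProfile a c α z
        + ((1 / α : ℝ) : ℂ) * (z : ℂ) * deriv (reciprocalRpowProfile a c α) z
      = a * reciprocalRpowProfile a c α z ^ 2 := by
  have hEuler : 1 / α * z * (α * z ^ (α - 1)) = z ^ α := by
    rw [Real.rpow_sub_one hz]; field_simp
  rw [(hasDerivAt_reciprocalRpowProfile a c hz hD).deriv, reciprocalRpowProfile]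
  set D := a + c * ((z ^ α : ℝ) : ℂ) with hD_def
  calc _ = (D - c * (((1 / α : ℝ) : ℂ) * z * ((α * z ^ (α - 1) : ℝ) : ℂ))) / D ^ 2 := by
        field_simp; ring
    _ = a * (1 / D) ^ 2 := by
        rw [← ofReal_mul, ← ofReal_mul, hEuler, hD_def]; field_simp; ring

theorem I_add_mul_ofReal_ne_zero {c : ℂ} (hc : 0 ≤ c.im) {x : ℝ} (hx : 0 ≤ x) :
    I + c * (x : ℂ) ≠ 0 := by
  have him : (I + c * x).im = 1 + c.im * x := by simp
  apply ne_of_apply_ne im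
  rw [him, zero_im]
  positivity

theorem im_sin_add_I_mul_cos_nonneg {α : ℝ} (hα : 0 < α) (hα1 : α ≤ 1) :
    0 ≤ ((Real.sin (α * Real.pi / 2) : ℂ) + I * (Real.cos (α * Real.pi / 2) : ℂ)).im := by
  have hcos : 0 ≤ Real.cos (α * Real.pi / 2) :=
    Real.cos_nonneg_of_mem_Icc ⟨by nlinarith [Real.pi_pos], by nlinarith [Real.pi_pos]⟩
  simpa only [add_im, ofReal_im, I_mul_im, ofReal_re, zero_add] using hcos

/-- The complexified `C^α` CLM profile `V(z) = 1/(i + C z^α)` solves the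
complex profile ODE `V + (1/α) z V' = i V²` on `(0,∞)`. -/
theorem complex_profile_ODE (α : ℝ) (hα : 0 < α) (hα1 : α ≤ 1)
    (C : ℂ) (hC : C = (Real.sin (α * Real.pi / 2) : ℂ)
      + Complex.I * (Real.cos (α * Real.pi / 2) : ℂ))
    (V : ℝ → ℂ) (hV : V = fun z : ℝ => 1 / (Complex.I + C * ((z ^ α : ℝ) : ℂ))) :
    DifferentiableOn ℝ V (Set.Ioi 0) ∧
    ∀ z : ℝ, 0 < z →
      V z + ((1 / α : ℝ) : ℂ) * ((z : ℝ) : ℂ) * deriv V z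
        = Complex.I * (V z) ^ 2 := by
  have hCim : 0 ≤ C.im := hC ▸ im_sin_add_I_mul_cos_nonneg hα hα1
  have hD (z : ℝ) (hz : 0 < z) : I + C * ((z ^ α : ℝ) : ℂ) ≠ 0 :=
    I_add_mul_ofReal_ne_zero hCim (Real.rpow_nonneg hz.le α)
  obtain rfl : V = reciprocalRpowProfile I C α := hV
  refine ⟨fun z hz => ?_, fun z hz => ?_⟩
  · exact (hasDerivAt_reciprocalRpowProfile I C hz.ne' (hD z hz)).differentiableAt
      |>.differentiableWithinAt
  · exact reciprocalRpowProfile_add_mul_deriv I C hα.ne' hz.ne' (hD z hz)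
end
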